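/- For integers a ≥ b ≥ 1, the two-row partition (a,b) is triangular if and only if the two-row partition (a+2, b+1) = (a,b) + δ(3) is triangular. -/

import Mathlib

/-- A partition: a weakly decreasing finite list of positive integers. -/
def IsPartition (l : List ℕ) : Prop :=
  l.Pairwise (· ≥ ·) ∧ ∀ x ∈ l, 0 < x

/-- The cells of the diagram of `l`: the pairs `(i, j)` of positive integers with
`1 ≤ i ≤ ℓ(l)` and `1 ≤ j ≤ l_i`. -/
def cells (l : List ℕ) : Set (ℕ × ℕ) :=
  {p | 1 ≤ p.1 ∧ p.1 ≤ l.length ∧ 1 ≤ p.2 ∧ p.2 ≤ l.getD (p.1 - 1) 0}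

/-- A partition is *triangular* if there are positive reals `r`, `s` such that its cells
are exactly the pairs of positive integers `(i, j)` with `i/r + j/s ≤ 1`. -/
def IsTriangular (l : List ℕ) : Prop :=
  ∃ r s : ℝ, 0 < r ∧ 0 < s ∧
    ∀ i j : ℕ, 1 ≤ i → 1 ≤ j →
      ((i, j) ∈ cells l ↔ (i : ℝ) / r + (j : ℝ) / s ≤ 1)

/-!
A line `i/r + j/s = 1` cuts out a two-row shape `(u, v)` exactly when it separates the ends of
both rows and leaves `(3, 1)` outside. The shear `(i, j) ↦ (i, i + j - 3)` carries the half-plane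
`i/r' + j/(s + 3) ≤ 1` onto `i/r + j/s ≤ 1` when `r' (r + s) = r (s + 3)`; it moves the rows of
`(u + 2, v + 1)` past the cells of `δ(3)` onto the rows of `(u, v)` and fixes `(3, 1)`. The cells of
`δ(3)` go to `(1, -1), (1, 0), (2, 0)`, which lie under the line as soon as `(2, 1)` does.
-/

lemma mem_cells_pair (u v i j : ℕ) :
    (i, j) ∈ cells [u, v] ↔ 1 ≤ j ∧ (i = 1 ∧ j ≤ u ∨ i = 2 ∧ j ≤ v) := by
  rcases i with _ | _ | _ | i <;> simp [cells]

def UnderLine (r s x y : ℝ) : Prop :=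
  x / r + y / s ≤ 1

lemma UnderLine.mono {r s x y x' y' : ℝ} (hr : 0 < r) (hs : 0 < s) (hx : x' ≤ x) (hy : y' ≤ y)
    (h : UnderLine r s x y) : UnderLine r s x' y' := by
  unfold UnderLine at *
  have := div_le_div_of_nonneg_right hx hr.le
  have := div_le_div_of_nonneg_right hy hs.le
  linarith

lemma underLine_shear {r s r' c : ℝ} (hr : r ≠ 0) (hs : 0 < s) (hsc : 0 < s + c)
    (hrel : r' * (r + s) = r * (s + c)) (x y : ℝ) :
    UnderLine r' (s + c) x y ↔ UnderLine r s x (x + y - c) := by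
  have hr' : r' ≠ 0 := by
    rintro rfl
    exact mul_ne_zero hr hsc.ne' (by linarith)
  have key : x / r + (x + y - c) / s = (s + c) / s * (x / r' + y / (s + c)) - c / s := by
    field_simp
    linear_combination x * hrel
  have hfactor : 0 < (s + c) / s := by positivity
  unfold UnderLine
  rw [key, sub_le_iff_le_add, show 1 + c / s = (s + c) / s * 1 by field_simp,
    mul_le_mul_iff_of_pos_left hfactor]

def TwoRowCut (u v : ℕ) (r s : ℝ) : Prop :=
  (∀ j : ℕ, 1 ≤ j → (j ≤ u ↔ UnderLine r s 1 j)) ∧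
    (∀ j : ℕ, 1 ≤ j → (j ≤ v ↔ UnderLine r s 2 j)) ∧ ¬ UnderLine r s 3 1

lemma isTriangular_pair_iff (u v : ℕ) :
    IsTriangular [u, v] ↔ ∃ r s : ℝ, 0 < r ∧ 0 < s ∧ TwoRowCut u v r s := by
  constructor
  · rintro ⟨r, s, hr, hs, h⟩
    refine ⟨r, s, hr, hs, fun j hj => ?_, fun j hj => ?_, fun h31 => ?_⟩
    · simpa [mem_cells_pair, hj, UnderLine] using h 1 j le_rfl hj
    · simpa [mem_cells_pair, hj, UnderLine] using h 2 j one_le_two hj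
    · simpa [mem_cells_pair] using (h 3 1 (by norm_num) le_rfl).2 (by simpa [UnderLine] using h31)
  · rintro ⟨r, s, hr, hs, h1, h2, h31⟩
    refine ⟨r, s, hr, hs, fun i j hi hj => ?_⟩
    change _ ↔ UnderLine r s i j
    rcases (by omega : i = 1 ∨ i = 2 ∨ 3 ≤ i) with rfl | rfl | hi
    · simpa [mem_cells_pair, hj] using h1 j hj
    · simpa [mem_cells_pair, hj] using h2 j hj
    · have hij : ¬ UnderLine r s i j := fun hij =>
        h31 (hij.mono hr hs (by exact_mod_cast hi) (by exact_mod_cast hj))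
      simp only [mem_cells_pair, hij, iff_false]
      omega

lemma forall_le_add_iff_shift {g : ℝ → Prop} (hg : Antitone g) (h0 : g 0)
    (u d : ℕ) :
    (∀ j : ℕ, 1 ≤ j → (j ≤ u + d ↔ g (j - d))) ↔ (∀ j : ℕ, 1 ≤ j → (j ≤ u ↔ g j)) := by
  constructor
  · intro h j hj
    simpa using h (j + d) (by omega)
  · intro h j hj
    rcases le_or_gt j d with hjd | hjd
    · exact iff_of_true (by omega) (hg (by simpa using hjd) h0)
    · obtain ⟨k, rfl⟩ := Nat.exists_eq_add_of_le' hjd.le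
      simpa using h k (by omega)

lemma twoRowCut_add_delta_iff {u v : ℕ} {r s r' : ℝ} (hr : 0 < r) (hs : 0 < s)
    (hrel : r' * (r + s) = r * (s + 3)) (h0 : UnderLine r s 2 0) :
    TwoRowCut (u + 2) (v + 1) r' (s + 3) ↔ TwoRowCut u v r s := by
  have shear := underLine_shear hr.ne' hs (by linarith) hrel
  have row (x : ℝ) (d : ℕ) (hd : x - 3 = -d) (j : ℕ) :
      UnderLine r' (s + 3) x j ↔ UnderLine r s x (j - d) := by
    rw [shear]
    congr! 1
    linarith
  have hanti (x : ℝ) : Antitone (UnderLine r s x) := fun _ _ hzy h => h.mono hr hs le_rfl hzy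
  unfold TwoRowCut
  simp only [row 1 2 (by norm_num), row 2 1 (by norm_num), shear 3 1,
    forall_le_add_iff_shift (hanti 1) (h0.mono hr hs one_le_two le_rfl),
    forall_le_add_iff_shift (hanti 2) h0]
  norm_num

lemma TwoRowCut.underLine_two {u v : ℕ} {r s : ℝ} (h : TwoRowCut u v r s) {j : ℕ} (hj : 1 ≤ j)
    (hjv : j ≤ v) : UnderLine r s 2 j :=
  (h.2.1 j hj).1 hjv

lemma exists_shear_preimage {r' s' : ℝ} (hr' : 0 < r') (hs' : 0 < s')
    (h22 : UnderLine r' s' 2 2) (h31 : ¬ UnderLine r' s' 3 1) :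
    ∃ r s : ℝ, 0 < r ∧ 0 < s ∧ s' = s + 3 ∧ r' * (r + s) = r * (s + 3) := by
  unfold UnderLine at h22 h31
  rw [div_add_div _ _ hr'.ne' hs'.ne', div_le_one (by positivity)] at h22 h31
  have hrs : r' < s' := by linarith
  have hs3 : 3 < s' := by nlinarith
  refine ⟨r' * (s' - 3) / (s' - r'), s' - 3, ?_, by linarith, by ring, ?_⟩
  · exact div_pos (mul_pos hr' (by linarith)) (by linarith)
  · field_simp [(sub_pos.2 hrs).ne']
    ring

theorem two_row_triangular_iff_add_delta_general (a b : ℕ) (hb : 1 ≤ b) :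
    IsTriangular [a, b] ↔ IsTriangular [a + 2, b + 1] := by
  rw [isTriangular_pair_iff, isTriangular_pair_iff]
  constructor
  · rintro ⟨r, s, hr, hs, hcut⟩
    have h21 : UnderLine r s 2 1 := by simpa using hcut.underLine_two le_rfl hb
    have h0 : UnderLine r s 2 0 := h21.mono hr hs le_rfl zero_le_one
    refine ⟨r * (s + 3) / (r + s), s + 3, by positivity, by positivity,
      (twoRowCut_add_delta_iff hr hs ?_ h0).2 hcut⟩
    field_simp
  · rintro ⟨r', s', hr', hs', hcut⟩
    obtain ⟨r, s, hr, hs, rfl, hrel⟩ := exists_shear_preimage hr' hs'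
      (by simpa using hcut.underLine_two one_le_two (by omega)) hcut.2.2
    have h0 : UnderLine r s 2 0 := by
      convert (underLine_shear hr.ne' hs (by positivity) hrel 2 1).1
        (by simpa using hcut.underLine_two le_rfl (by omega)) using 1
      norm_num
    exact ⟨r, s, hr, hs, (twoRowCut_add_delta_iff hr hs hrel h0).1 hcut⟩

/-- For `a ≥ b ≥ 1`, the two-row partition `(a, b)` is triangular iff
`(a, b) + δ(3) = (a + 2, b + 1)` is triangular. -/
theorem two_row_triangular_iff_add_delta (a b : ℕ) (hb : 1 ≤ b) (hba : b ≤ a) :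
    IsTriangular [a, b] ↔ IsTriangular [a + 2, b + 1] :=
  two_row_triangular_iff_add_delta_general a b hb
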